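/- Let w be a weight on ℝⁿ and suppose there exist B, β ≥ 1 and γ > 0 such that C_S^w(α) - 1 ≤ B(1-α)^{1/β} for all α ∈ (1 - e^{-γ}, 1), where C_S^w is the weighted sharp Tauberian constant for the strong maximal operator. Then w satisfies the reverse Hölder inequality ((1/|R|)∫_R w^r)^{1/r} ≤ max(B, e^{γ/β})^{β/r'} ((β'-1)/(β'-r))^{1/r} · (1/|R|)∫_R w for every axis-parallel rectangle R ⊆ ℝⁿ and every 1 < r < β' = β/(β-1). -/

import Mathlib

/-!
If a measurable set `E` fills more than an `α`-fraction of a rectangle `R`, then `R` lies in the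
halo `{M_S 1_E > α}`, so the Solyanik estimate gives `w(R) ≤ (1 + B (1 - α)^(1/β)) w(E)`.
Applied to `E = R \ S` and letting `α ↑ 1 - |S|/|R|`, this yields the `A∞`-type bound
`w(S) ≤ K (|S|/|R|)^(1/β) w(R)` for `S ⊆ R`, where `K = max B (exp (γ/β))`. Together with
Chebyshev's inequality on `S = {w > t} ∩ R` it gives the decay
`w({w > t} ∩ R) ≤ w(R) (λ/t)^(1/(β-1))` with `λ = K^β w(R)/|R|`, and the layer-cake formula
`∫_R w^r = (r - 1) ∫_0^∞ t^(r-2) w({w > t} ∩ R) dt`, split at `t = λ`, gives the reverse Hölder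
inequality.
-/

open MeasureTheory Set
open scoped ENNReal NNReal

/-- The open axis-parallel rectangle (rectangular parallelepiped) determined by `a` and `b`. -/
def rect {n : ℕ} (a b : Fin n → ℝ) : Set (Fin n → ℝ) :=
  Set.univ.pi fun i => Set.Ioo (a i) (b i)

/-- The strong maximal operator on `ℝⁿ` over axis-parallel rectangles. -/
noncomputable def MS {n : ℕ} (f : (Fin n → ℝ) → ℝ) (x : Fin n → ℝ) : ℝ :=
  sSup {r : ℝ | ∃ a b : Fin n → ℝ, (∀ i, x i ∈ Set.Ioo (a i) (b i)) ∧
    r = (volume (rect a b)).toReal⁻¹ * ∫ y in rect a b, |f y|}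

/-- The `w`-measure of a set: `w(S) = ∫_S w`. -/
noncomputable def wInt {n : ℕ} (w : (Fin n → ℝ) → ℝ) (S : Set (Fin n → ℝ)) : ℝ≥0∞ :=
  ∫⁻ x in S, ENNReal.ofReal (w x)

/-- The weighted sharp Tauberian constant of the strong maximal operator. -/
noncomputable def CSw {n : ℕ} (w : (Fin n → ℝ) → ℝ) (α : ℝ) : ℝ≥0∞ :=
  ⨆ (E : Set (Fin n → ℝ)) (_ : MeasurableSet E) (_ : 0 < wInt w E) (_ : wInt w E < ⊤),
    wInt w {x | α < MS (E.indicator 1) x} / wInt w E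

section Rectangles

variable {n : ℕ}

lemma measurableSet_rect (a b : Fin n → ℝ) : MeasurableSet (rect a b) :=
  .univ_pi fun _ => measurableSet_Ioo

lemma volume_rect (a b : Fin n → ℝ) :
    volume (rect a b) = ∏ i, ENNReal.ofReal (b i - a i) := by
  simp [rect, volume_pi_pi, Real.volume_Ioo]

lemma volume_rect_lt_top (a b : Fin n → ℝ) : volume (rect a b) < ⊤ := by
  rw [volume_rect]
  exact ENNReal.prod_lt_top fun _ _ => ENNReal.ofReal_lt_top

lemma volume_rect_pos {a b : Fin n → ℝ} (hab : ∀ i, a i < b i) : 0 < volume (rect a b) := by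
  rw [volume_rect]
  exact CanonicallyOrderedAdd.prod_pos.mpr fun i _ => ENNReal.ofReal_pos.mpr (sub_pos.mpr (hab i))

lemma volume_rect_toReal_pos {a b : Fin n → ℝ} (hab : ∀ i, a i < b i) :
    0 < (volume (rect a b)).toReal :=
  ENNReal.toReal_pos (volume_rect_pos hab).ne' (volume_rect_lt_top a b).ne

lemma rect_subset_Icc (a b : Fin n → ℝ) : rect a b ⊆ Icc a b :=
  fun _ hx => ⟨fun i => (hx i trivial).1.le, fun i => (hx i trivial).2.le⟩

end Rectangles

section MaximalFunction

variable {n : ℕ} {E : Set (Fin n → ℝ)}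

lemma setIntegral_abs_indicator_one (hE : MeasurableSet E) (S : Set (Fin n → ℝ)) :
    ∫ y in S, |E.indicator (1 : (Fin n → ℝ) → ℝ) y| = (volume (E ∩ S)).toReal := by
  have habs : (fun y => |E.indicator (1 : (Fin n → ℝ) → ℝ) y|) = E.indicator 1 := by
    ext y
    by_cases h : y ∈ E <;> simp [h]
  rw [habs, setIntegral_indicator hE]
  simp [measureReal_def, inter_comm]

lemma bddAbove_rect_averages_indicator (hE : MeasurableSet E) (x : Fin n → ℝ) :
    BddAbove {r : ℝ | ∃ a b : Fin n → ℝ, (∀ i, x i ∈ Ioo (a i) (b i)) ∧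
      r = (volume (rect a b)).toReal⁻¹ * ∫ y in rect a b, |E.indicator 1 y|} := by
  refine ⟨1, ?_⟩
  rintro _ ⟨a, b, hx, rfl⟩
  rw [setIntegral_abs_indicator_one hE,
    inv_mul_le_iff₀ (volume_rect_toReal_pos fun i => (hx i).1.trans (hx i).2), mul_one]
  exact ENNReal.toReal_mono (volume_rect_lt_top a b).ne (measure_mono inter_subset_right)

lemma le_MS_indicator (hE : MeasurableSet E) {a b x : Fin n → ℝ} (hx : x ∈ rect a b) :
    (volume (rect a b)).toReal⁻¹ * (volume (E ∩ rect a b)).toReal ≤ MS (E.indicator 1) x :=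
  le_csSup (bddAbove_rect_averages_indicator hE x)
    ⟨a, b, fun i => hx i trivial, by rw [setIntegral_abs_indicator_one hE]⟩

lemma rect_subset_MS_indicator_gt (hE : MeasurableSet E) {a b : Fin n → ℝ}
    (hab : ∀ i, a i < b i) {α : ℝ}
    (hdense : α * (volume (rect a b)).toReal < (volume (E ∩ rect a b)).toReal) :
    rect a b ⊆ {x | α < MS (E.indicator 1) x} := fun x hx =>
  ((lt_inv_mul_iff₀ (volume_rect_toReal_pos hab)).mpr (by rwa [mul_comm])).trans_le
    (le_MS_indicator hE hx)

end MaximalFunction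

lemma exists_measure_ball_pos_lt {X : Type*} [MetricSpace X] [MeasurableSpace X]
    [OpensMeasurableSpace X] [HereditarilyLindelofSpace X] (μ : Measure X)
    [IsFiniteMeasure μ] [NullSingletonClass μ] (hμ : μ ≠ 0) {ε : ℝ≥0∞} (hε : 0 < ε) :
    ∃ x r, 0 < μ (Metric.ball x r) ∧ μ (Metric.ball x r) < ε := by
  obtain ⟨x, hx⟩ := Measure.nonempty_support hμ
  have hshrink : Filter.Tendsto (fun r => μ (Metric.ball x r)) (nhdsWithin 0 (Ioi 0))
      (nhds (μ {x})) := by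
    rw [← Metric.closedBall_zero, ← Metric.biInter_gt_ball]
    exact tendsto_measure_biInter_gt (fun _ _ => measurableSet_ball.nullMeasurableSet)
      (fun _ _ _ hij => Metric.ball_subset_ball hij) ⟨1, one_pos, measure_ne_top μ _⟩
  obtain ⟨r, hr, hrε⟩ := ((hshrink.eventually_lt_const (by simpa using hε)).and
    self_mem_nhdsWithin).exists
  exact ⟨x, r, (Measure.mem_support_iff_forall x).mp hx _ (Metric.ball_mem_nhds x hrε), hr⟩

section Weighted

variable {n : ℕ} {w : (Fin n → ℝ) → ℝ}

noncomputable def wMeasure (w : (Fin n → ℝ) → ℝ) : Measure (Fin n → ℝ) :=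
  volume.withDensity fun x => ENNReal.ofReal (w x)

lemma wInt_eq_wMeasure (w : (Fin n → ℝ) → ℝ) (S : Set (Fin n → ℝ)) :
    wInt w S = wMeasure w S :=
  (withDensity_apply' _ S).symm

lemma wMeasure_rect_lt_top (hloc : LocallyIntegrable w volume) (a b : Fin n → ℝ) :
    wMeasure w (rect a b) < ⊤ := by
  rw [← wInt_eq_wMeasure]
  exact ((hloc.integrableOn_isCompact isCompact_Icc).mono_set
    (rect_subset_Icc a b)).lintegral_lt_top

instance [Nontrivial (Fin n → ℝ)] : NullSingletonClass (wMeasure w) :=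
  ⟨fun x => withDensity_absolutelyContinuous _ _ (measure_singleton x)⟩

lemma exists_subset_rect_wMeasure_pos_lt [Nontrivial (Fin n → ℝ)]
    (hloc : LocallyIntegrable w volume) {a b : Fin n → ℝ} (hR : 0 < wMeasure w (rect a b))
    {ε : ℝ≥0∞} (hε : 0 < ε) :
    ∃ T ⊆ rect a b, MeasurableSet T ∧ 0 < wMeasure w T ∧ wMeasure w T < ε := by
  have : IsFiniteMeasure ((wMeasure w).restrict (rect a b)) :=
    isFiniteMeasure_restrict.mpr (wMeasure_rect_lt_top hloc a b).ne
  obtain ⟨z, r, hpos, hsmall⟩ := exists_measure_ball_pos_lt ((wMeasure w).restrict (rect a b))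
    (by simpa [Measure.restrict_eq_zero] using hR.ne') hε
  rw [Measure.restrict_apply measurableSet_ball] at hpos hsmall
  exact ⟨_, inter_subset_right, measurableSet_ball.inter (measurableSet_rect a b), hpos, hsmall⟩

def SolyanikEstimate (w : (Fin n → ℝ) → ℝ) (B β γ : ℝ) : Prop :=
  ∀ α : ℝ, 1 - Real.exp (-γ) < α → α < 1 →
    CSw w α - 1 ≤ ENNReal.ofReal (B * (1 - α) ^ (1 / β))

lemma div_le_CSw {E : Set (Fin n → ℝ)} (hE : MeasurableSet E) (hE0 : 0 < wInt w E)
    (hEfin : wInt w E < ⊤) (α : ℝ) :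
    wInt w {x | α < MS (E.indicator 1) x} / wInt w E ≤ CSw w α :=
  le_iSup_of_le E <| le_iSup_of_le hE <| le_iSup_of_le hE0 <| le_iSup_of_le hEfin le_rfl

variable {B β γ α : ℝ} {a b : Fin n → ℝ} {E : Set (Fin n → ℝ)}

lemma wMeasure_rect_le_of_pos (htaub : SolyanikEstimate w B β γ)
    (hα : 1 - Real.exp (-γ) < α) (hα1 : α < 1) (hab : ∀ i, a i < b i)
    (hE : MeasurableSet E) (hE0 : 0 < wMeasure w E) (hEfin : wMeasure w E < ⊤)
    (hdense : α * (volume (rect a b)).toReal < (volume (E ∩ rect a b)).toReal) :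
    wMeasure w (rect a b) ≤ (1 + ENNReal.ofReal (B * (1 - α) ^ (1 / β))) * wMeasure w E := by
  rw [← wInt_eq_wMeasure] at hE0 hEfin
  calc wMeasure w (rect a b) ≤ wMeasure w {x | α < MS (E.indicator 1) x} :=
        measure_mono (rect_subset_MS_indicator_gt hE hab hdense)
    _ ≤ CSw w α * wMeasure w E := by
        rw [← wInt_eq_wMeasure, ← wInt_eq_wMeasure, ← ENNReal.div_le_iff hE0.ne' hEfin.ne]
        exact div_le_CSw hE hE0 hEfin α
    _ ≤ _ := by
        gcongr
        exact tsub_le_iff_left.mp (htaub α hα hα1)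

lemma wMeasure_rect_le (htaub : SolyanikEstimate w B β γ) (hloc : LocallyIntegrable w volume)
    (hα : 1 - Real.exp (-γ) < α) (hα0 : 0 ≤ α) (hα1 : α < 1) (hab : ∀ i, a i < b i)
    (hE : MeasurableSet E) (hEfin : wMeasure w E < ⊤)
    (hdense : α * (volume (rect a b)).toReal < (volume (E ∩ rect a b)).toReal) :
    wMeasure w (rect a b) ≤ (1 + ENNReal.ofReal (B * (1 - α) ^ (1 / β))) * wMeasure w E := by
  set D := ENNReal.ofReal (B * (1 - α) ^ (1 / β))
  rcases (zero_le : 0 ≤ wMeasure w E).lt_or_eq with hE0 | hE0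
  · exact wMeasure_rect_le_of_pos htaub hα hα1 hab hE hE0 hEfin hdense
  by_contra! hlt
  rw [← hE0, mul_zero] at hlt
  -- `E ∩ R` and `R \ E` are nonempty, so `n ≥ 1` and `w dx` has no atoms: adding to `E` a
  -- set `T` of small positive weight reduces to the positive case, and `w(R) ≤ (1 + D) w(T)`
  -- fails once `w(T) < w(R) / (1 + D)`.
  obtain ⟨x, hxE, -⟩ : (E ∩ rect a b).Nonempty := by
    refine nonempty_of_measure_ne_zero (μ := volume) fun h => ?_
    rw [h, ENNReal.toReal_zero] at hdense
    exact hdense.not_ge (mul_nonneg hα0 ENNReal.toReal_nonneg)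
  obtain ⟨y, -, hyE⟩ : (rect a b \ E).Nonempty :=
    nonempty_of_measure_ne_zero (by rw [measure_sdiff_null hE0.symm]; exact hlt.ne')
  have : Nontrivial (Fin n → ℝ) := ⟨x, y, fun h => hyE (h ▸ hxE)⟩
  have hD : 1 + D ≠ ⊤ := ENNReal.add_ne_top.mpr ⟨ENNReal.one_ne_top, ENNReal.ofReal_ne_top⟩
  obtain ⟨T, -, hT, hpos, hsmall⟩ :=
    exists_subset_rect_wMeasure_pos_lt hloc hlt (ENNReal.div_pos hlt.ne' hD)
  have hET : wMeasure w (E ∪ T) ≤ wMeasure w T :=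
    (measure_union_le E T).trans (by rw [← hE0, zero_add])
  have hbound := wMeasure_rect_le_of_pos htaub hα hα1 hab (hE.union hT)
    (hpos.trans_le (measure_mono subset_union_right)) (hET.trans_lt (hsmall.trans_le le_top))
    (hdense.trans_le (ENNReal.toReal_mono (measure_ne_top_of_subset inter_subset_right
      (volume_rect_lt_top a b).ne) (measure_mono (inter_subset_inter_left _ subset_union_left))))
  refine lt_irrefl (wMeasure w (rect a b)) ?_
  calc wMeasure w (rect a b) ≤ (1 + D) * wMeasure w (E ∪ T) := hbound
    _ ≤ (1 + D) * wMeasure w T := by gcongr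
    _ < wMeasure w (rect a b) := by rw [mul_comm]; exact ENNReal.mul_lt_of_lt_div hsmall

end Weighted

section AInfinity

variable {n : ℕ} {w : (Fin n → ℝ) → ℝ} {B β γ : ℝ} {a b : Fin n → ℝ} {S : Set (Fin n → ℝ)}

lemma wMeasure_le_of_volume_lt (htaub : SolyanikEstimate w B β γ)
    (hloc : LocallyIntegrable w volume) (hab : ∀ i, a i < b i) (hS : MeasurableSet S)
    (hSR : S ⊆ rect a b) {δ : ℝ} (hδ : (volume S).toReal < δ * (volume (rect a b)).toReal)
    (hδγ : δ < Real.exp (-γ)) (hδ1 : δ ≤ 1) :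
    wMeasure w S ≤ ENNReal.ofReal (B * δ ^ (1 / β)) * wMeasure w (rect a b) := by
  have hRSfin : wMeasure w (rect a b \ S) ≠ ⊤ :=
    measure_ne_top_of_subset sdiff_subset (wMeasure_rect_lt_top hloc a b).ne
  have hvol : (volume ((rect a b \ S) ∩ rect a b)).toReal =
      (volume (rect a b)).toReal - (volume S).toReal := by
    rw [inter_eq_left.mpr sdiff_subset, measure_sdiff hSR hS.nullMeasurableSet
      (measure_ne_top_of_subset hSR (volume_rect_lt_top a b).ne),
      ENNReal.toReal_sub_of_le (measure_mono hSR) (volume_rect_lt_top a b).ne]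
  have hδ0 : 0 < δ := pos_of_mul_pos_left (ENNReal.toReal_nonneg.trans_lt hδ)
    (volume_rect_toReal_pos hab).le
  have hsolyanik := wMeasure_rect_le htaub hloc (α := 1 - δ) (by linarith) (by linarith)
    (by linarith) hab ((measurableSet_rect a b).diff hS) (lt_top_iff_ne_top.mpr hRSfin)
    (by rw [hvol]; linarith)
  rw [sub_sub_cancel, ← measure_sdiff_add_inter (μ := wMeasure w) (rect a b) hS,
    inter_eq_right.mpr hSR, add_mul, one_mul] at hsolyanik
  exact ((ENNReal.add_le_add_iff_left hRSfin).mp hsolyanik).trans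
    (by gcongr; exact sdiff_subset)

lemma wMeasure_le_volume_ratio_rpow (htaub : SolyanikEstimate w B β γ)
    (hloc : LocallyIntegrable w volume) (hβ : 0 < β) (hγ : 0 < γ) (hab : ∀ i, a i < b i)
    (hS : MeasurableSet S) (hSR : S ⊆ rect a b) :
    wMeasure w S ≤ ENNReal.ofReal (max B (Real.exp (γ / β)) *
      ((volume S).toReal / (volume (rect a b)).toReal) ^ (1 / β)) * wMeasure w (rect a b) := by
  set K := max B (Real.exp (γ / β))
  set t := (volume S).toReal / (volume (rect a b)).toReal
  have hv := volume_rect_toReal_pos hab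
  rcases le_or_gt (Real.exp (-γ)) t with hbig | hsmall
  · have hK : 1 ≤ K * t ^ (1 / β) := calc
      (1 : ℝ) = Real.exp (γ / β) * Real.exp (-γ) ^ (1 / β) := by
        rw [← Real.exp_mul, ← Real.exp_add]; field_simp; simp
      _ ≤ K * t ^ (1 / β) := by gcongr; exact le_max_right _ _
    calc wMeasure w S ≤ 1 * wMeasure w (rect a b) := by rw [one_mul]; exact measure_mono hSR
      _ ≤ _ := by gcongr; exact ENNReal.one_le_ofReal.mpr hK
  have hlim : Filter.Tendsto (fun δ => ENNReal.ofReal (B * δ ^ (1 / β)) * wMeasure w (rect a b))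
      (nhdsWithin t (Ioi t)) (nhds (ENNReal.ofReal (B * t ^ (1 / β)) * wMeasure w (rect a b))) :=
    ENNReal.Tendsto.mul_const ((ENNReal.continuous_ofReal.continuousAt.comp
      (continuousAt_const.mul (Real.continuousAt_rpow_const _ _ (Or.inr (by positivity))))
      ).tendsto.mono_left nhdsWithin_le_nhds) (Or.inr (wMeasure_rect_lt_top hloc a b).ne)
  have hδ : ∀ᶠ δ in nhdsWithin t (Ioi t),
      wMeasure w S ≤ ENNReal.ofReal (B * δ ^ (1 / β)) * wMeasure w (rect a b) := by
    filter_upwards [Ioo_mem_nhdsGT hsmall] with δ ⟨htδ, hδγ⟩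
    exact wMeasure_le_of_volume_lt htaub hloc hab hS hSR ((div_lt_iff₀ hv).mp htδ) hδγ
      (hδγ.trans (Real.exp_lt_one_iff.mpr (neg_lt_zero.mpr hγ))).le
  calc wMeasure w S ≤ ENNReal.ofReal (B * t ^ (1 / β)) * wMeasure w (rect a b) :=
        ge_of_tendsto hlim hδ
    _ ≤ _ := by gcongr; exact le_max_left _ _

end AInfinity

lemma le_rpow_of_rpow_le_mul {m c β : ℝ} (hβ : 1 < β) (hm : 0 ≤ m) (hc : 0 ≤ c)
    (h : m ^ β ≤ c * m) : m ≤ c ^ (1 / (β - 1)) := by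
  rcases hm.eq_or_lt with rfl | hm
  · positivity
  have hpow : m ^ (β - 1) ≤ c := by
    rwa [Real.rpow_sub_one hm.ne', div_le_iff₀ hm]
  calc m = (m ^ (β - 1)) ^ (1 / (β - 1)) := by
        rw [← Real.rpow_mul hm.le, mul_one_div_cancel (by linarith), Real.rpow_one]
    _ ≤ c ^ (1 / (β - 1)) := by gcongr

section Decay

variable {n : ℕ} {w : (Fin n → ℝ) → ℝ} {a b : Fin n → ℝ}

lemma mul_volume_le_wMeasure_superlevel (hmeas : Measurable w) {t : ℝ} {S : Set (Fin n → ℝ)}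
    (hS : S ⊆ {x | t < w x}) : ENNReal.ofReal t * volume S ≤ wMeasure w S := by
  rw [← wInt_eq_wMeasure, ← setLIntegral_const]
  exact setLIntegral_mono hmeas.ennreal_ofReal fun x hx => ENNReal.ofReal_le_ofReal (hS hx).le

lemma wMeasure_superlevel_le {K β : ℝ} (hβ : 1 < β) (hK : 0 ≤ K) (hmeas : Measurable w)
    (hloc : LocallyIntegrable w volume) (hab : ∀ i, a i < b i)
    (hainf : ∀ S ⊆ rect a b, MeasurableSet S → wMeasure w S ≤ ENNReal.ofReal (K *
      ((volume S).toReal / (volume (rect a b)).toReal) ^ (1 / β)) * wMeasure w (rect a b))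
    {t : ℝ} (ht : 0 < t) :
    wMeasure w ({x | t < w x} ∩ rect a b) ≤
      ENNReal.ofReal ((wMeasure w (rect a b)).toReal * (K ^ β * (wMeasure w (rect a b)).toReal /
        (volume (rect a b)).toReal / t) ^ (1 / (β - 1))) := by
  set S := {x | t < w x} ∩ rect a b
  set A := (wMeasure w (rect a b)).toReal
  set v := (volume (rect a b)).toReal
  set m := (wMeasure w S).toReal
  set s := (volume S).toReal
  have hv : 0 < v := volume_rect_toReal_pos hab
  have hRfin := (wMeasure_rect_lt_top hloc a b).ne
  have hSfin : wMeasure w S ≠ ⊤ := measure_ne_top_of_subset inter_subset_right hRfin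
  have hA : 0 ≤ A := ENNReal.toReal_nonneg
  have hm : 0 ≤ m := ENNReal.toReal_nonneg
  have hSm : MeasurableSet S :=
    (measurableSet_lt measurable_const hmeas).inter (measurableSet_rect a b)
  have hcheb : t * s ≤ m := by
    have := ENNReal.toReal_mono hSfin (mul_volume_le_wMeasure_superlevel hmeas inter_subset_left)
    rwa [ENNReal.toReal_mul, ENNReal.toReal_ofReal ht.le] at this
  have hainfS : m ≤ K * (s / v) ^ (1 / β) * A := by
    have := ENNReal.toReal_mono (ENNReal.mul_ne_top ENNReal.ofReal_ne_top hRfin)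
      (hainf S inter_subset_right hSm)
    rwa [ENNReal.toReal_mul, ENNReal.toReal_ofReal (by positivity)] at this
  have hβ0 : 0 < β := by linarith
  have hpow : m ^ β ≤ A ^ (β - 1) * (K ^ β * A / v / t) * m := calc
    m ^ β ≤ (K * (s / v) ^ (1 / β) * A) ^ β := by gcongr
    _ = K ^ β * (s / v) * (A ^ (β - 1) * A) := by
      rw [Real.mul_rpow (by positivity) hA, Real.mul_rpow hK (by positivity), one_div,
        Real.rpow_inv_rpow (by positivity) hβ0.ne', ← Real.rpow_add_one' hA (by linarith),
        sub_add_cancel]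
    _ ≤ K ^ β * (m / t / v) * (A ^ (β - 1) * A) := by
      gcongr
      rwa [le_div_iff₀ ht, mul_comm]
    _ = A ^ (β - 1) * (K ^ β * A / v / t) * m := by ring
  rw [← ENNReal.ofReal_toReal hSfin]
  refine ENNReal.ofReal_le_ofReal ((le_rpow_of_rpow_le_mul hβ hm (by positivity) hpow).trans_eq ?_)
  rw [Real.mul_rpow (by positivity) (by positivity), ← Real.rpow_mul hA,
    mul_one_div_cancel (by linarith), Real.rpow_one]

end Decay

section LayerCake

lemma lintegral_Ioc_rpow {c q : ℝ} (hc : 0 ≤ c) (hq : -1 < q) :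
    ∫⁻ t in Ioc 0 c, ENNReal.ofReal (t ^ q) = ENNReal.ofReal (c ^ (q + 1) / (q + 1)) := by
  rw [← ofReal_integral_eq_lintegral_ofReal (intervalIntegral.intervalIntegrable_rpow' hq).1
      ((ae_restrict_iff' measurableSet_Ioc).mpr
        (ae_of_all _ fun t ht => Real.rpow_nonneg ht.1.le q)),
    ← intervalIntegral.integral_of_le hc, integral_rpow (Or.inl hq),
    Real.zero_rpow (by linarith), sub_zero]

lemma lintegral_Ioi_rpow {c q : ℝ} (hc : 0 < c) (hq : q < -1) :
    ∫⁻ t in Ioi c, ENNReal.ofReal (t ^ q) = ENNReal.ofReal (-c ^ (q + 1) / (q + 1)) := by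
  rw [← ofReal_integral_eq_lintegral_ofReal (integrableOn_Ioi_rpow_of_lt hq hc)
      ((ae_restrict_iff' measurableSet_Ioi).mpr
        (ae_of_all _ fun t ht => Real.rpow_nonneg (hc.trans ht).le q)),
    integral_Ioi_rpow_of_lt hq hc]

variable {X : Type*} [MeasurableSpace X] {μ : Measure X} {f : X → ℝ} {A L p q : ℝ}

lemma setLIntegral_Ioc_meas_lt_mul_rpow_le (hA : 0 ≤ A) (hL : 0 ≤ L) (hq : 0 < q)
    (hbound : ∀ t, μ {x | t < f x} ≤ ENNReal.ofReal A) :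
    ∫⁻ t in Ioc 0 L, μ {x | t < f x} * ENNReal.ofReal (t ^ (q - 1)) ≤
      ENNReal.ofReal (A * (L ^ q / q)) := calc
  _ ≤ ∫⁻ t in Ioc 0 L, ENNReal.ofReal A * ENNReal.ofReal (t ^ (q - 1)) :=
      lintegral_mono fun t => by gcongr; exact hbound t
  _ = _ := by
      rw [lintegral_const_mul' _ _ ENNReal.ofReal_ne_top, lintegral_Ioc_rpow hL (by linarith),
        sub_add_cancel, ← ENNReal.ofReal_mul hA]

lemma setLIntegral_Ioi_meas_lt_mul_rpow_le (hA : 0 ≤ A) (hL : 0 < L) (hqp : q < p)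
    (hdecay : ∀ t, 0 < t → μ {x | t < f x} ≤ ENNReal.ofReal (A * (L / t) ^ p)) :
    ∫⁻ t in Ioi L, μ {x | t < f x} * ENNReal.ofReal (t ^ (q - 1)) ≤
      ENNReal.ofReal (A * (L ^ q / (p - q))) := calc
  _ ≤ ∫⁻ t in Ioi L, ENNReal.ofReal (A * L ^ p) * ENNReal.ofReal (t ^ (q - 1 - p)) := by
      refine setLIntegral_mono' measurableSet_Ioi fun t (ht : L < t) => ?_
      have ht0 : 0 < t := hL.trans ht
      calc μ {x | t < f x} * ENNReal.ofReal (t ^ (q - 1))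
          ≤ ENNReal.ofReal (A * (L / t) ^ p) * ENNReal.ofReal (t ^ (q - 1)) := by
            gcongr; exact hdecay t ht0
        _ = _ := by
            rw [← ENNReal.ofReal_mul (mul_nonneg hA (by positivity)),
              ← ENNReal.ofReal_mul (mul_nonneg hA (by positivity)),
              Real.div_rpow hL.le ht0.le, Real.rpow_sub ht0 (q - 1) p]
            congr 1
            ring
  _ = _ := by
      rw [lintegral_const_mul' _ _ ENNReal.ofReal_ne_top, lintegral_Ioi_rpow hL (by linarith),
        ← ENNReal.ofReal_mul (mul_nonneg hA (by positivity))]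
      congr 1
      rw [show q - 1 - p + 1 = q - p by ring, Real.rpow_sub hL q p, ← neg_sub p q, div_neg,
        neg_div, neg_neg]
      field_simp

lemma lintegral_rpow_le_of_meas_lt_le (hf : 0 ≤ᵐ[μ] f) (hfm : AEMeasurable f μ)
    (hA : 0 ≤ A) (hL : 0 ≤ L) (hq : 0 < q) (hqp : q < p)
    (hbound : ∀ t, μ {x | t < f x} ≤ ENNReal.ofReal A)
    (hdecay : ∀ t, 0 < t → μ {x | t < f x} ≤ ENNReal.ofReal (A * (L / t) ^ p)) :
    ∫⁻ x, ENNReal.ofReal (f x ^ q) ∂μ ≤ ENNReal.ofReal (A * L ^ q * (p / (p - q))) := by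
  have hpq : 0 < p - q := by linarith
  rw [lintegral_rpow_eq_lintegral_meas_lt_mul μ hf hfm hq]
  rcases hL.eq_or_lt with rfl | hL
  · have hnull : ∀ t ∈ Ioi (0 : ℝ), μ {x | t < f x} * ENNReal.ofReal (t ^ (q - 1)) = 0 :=
      fun t ht => by
        rw [nonpos_iff_eq_zero.mp ((hdecay t ht).trans_eq (by
          rw [zero_div, Real.zero_rpow (by linarith), mul_zero, ENNReal.ofReal_zero])), zero_mul]
    rw [setLIntegral_congr_fun measurableSet_Ioi hnull, lintegral_zero, mul_zero]
    exact zero_le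
  rw [← Ioc_union_Ioi_eq_Ioi hL.le, lintegral_union measurableSet_Ioi (Ioc_disjoint_Ioi le_rfl)]
  calc ENNReal.ofReal q * (_ + _)
      ≤ ENNReal.ofReal q * (ENNReal.ofReal (A * (L ^ q / q)) +
          ENNReal.ofReal (A * (L ^ q / (p - q)))) := by
        gcongr
        · exact setLIntegral_Ioc_meas_lt_mul_rpow_le hA hL.le hq hbound
        · exact setLIntegral_Ioi_meas_lt_mul_rpow_le hA hL hqp hdecay
    _ = ENNReal.ofReal (A * L ^ q * (p / (p - q))) := by
        rw [← ENNReal.ofReal_add (mul_nonneg hA (by positivity))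
          (mul_nonneg hA (div_nonneg (by positivity) hpq.le)), ← ENNReal.ofReal_mul hq.le]
        congr 1
        field_simp
        ring

end LayerCake

lemma one_lt_of_one_lt_div_sub_one {β : ℝ} (h : 1 < β / (β - 1)) : 1 < β := by
  rcases lt_trichotomy (β - 1) 0 with hneg | hzero | hpos
  · linarith [(one_lt_div_of_neg hneg).mp h]
  · rw [hzero, div_zero] at h
    linarith
  · linarith

section ReverseHolder

variable {n : ℕ} {w : (Fin n → ℝ) → ℝ} {B β γ : ℝ} {a b : Fin n → ℝ}

lemma setLIntegral_rpow_eq_lintegral_wMeasure (hw : ∀ x, 0 ≤ w x) (hmeas : Measurable w)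
    {S : Set (Fin n → ℝ)} (hS : MeasurableSet S) {r : ℝ} (hr : r ≠ 0) :
    ∫⁻ x in S, ENNReal.ofReal (w x ^ r) =
      ∫⁻ x, ENNReal.ofReal (w x ^ (r - 1)) ∂(wMeasure w).restrict S := by
  rw [wMeasure, setLIntegral_withDensity_eq_setLIntegral_mul _ hmeas.ennreal_ofReal
    (hmeas.pow_const _).ennreal_ofReal hS]
  refine lintegral_congr fun x => ?_
  rw [Pi.mul_apply, ← ENNReal.ofReal_mul (hw x), ← Real.rpow_one_add' (hw x) (by simpa),
    add_sub_cancel]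

lemma setIntegral_eq_toReal_wMeasure (hw : ∀ x, 0 ≤ w x) (hmeas : Measurable w)
    (S : Set (Fin n → ℝ)) : ∫ x in S, w x = (wMeasure w S).toReal := by
  rw [integral_eq_lintegral_of_nonneg_ae (ae_of_all _ hw) hmeas.aestronglyMeasurable, ← wInt,
    wInt_eq_wMeasure]

lemma setIntegral_rect_rpow_le (htaub : SolyanikEstimate w B β γ) (hw : ∀ x, 0 ≤ w x)
    (hmeas : Measurable w) (hloc : LocallyIntegrable w volume) (hβ : 1 < β) (hγ : 0 < γ)
    (hab : ∀ i, a i < b i) {r : ℝ} (hr1 : 1 < r) (hr2 : r < β / (β - 1)) :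
    ∫ x in rect a b, w x ^ r ≤ (wMeasure w (rect a b)).toReal * (max B (Real.exp (γ / β)) ^ β *
      (wMeasure w (rect a b)).toReal / (volume (rect a b)).toReal) ^ (r - 1) *
      ((β / (β - 1) - 1) / (β / (β - 1) - r)) := by
  have hK : 0 < max B (Real.exp (γ / β)) := (Real.exp_pos _).trans_le (le_max_right _ _)
  have hA : 0 ≤ (wMeasure w (rect a b)).toReal := ENNReal.toReal_nonneg
  have hRfin := (wMeasure_rect_lt_top hloc a b).ne
  have hβ0 : β - 1 ≠ 0 := by linarith
  have hβ1 : β / (β - 1) = 1 / (β - 1) + 1 := by field_simp; ring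
  rw [integral_eq_lintegral_of_nonneg_ae (ae_of_all _ fun x => Real.rpow_nonneg (hw x) r)
    (hmeas.pow_const r).aestronglyMeasurable]
  refine ENNReal.toReal_le_of_le_ofReal
    (mul_nonneg (by positivity) (div_nonneg (by linarith) (by linarith))) ?_
  rw [setLIntegral_rpow_eq_lintegral_wMeasure hw hmeas (measurableSet_rect a b) (by linarith)]
  refine (lintegral_rpow_le_of_meas_lt_le (μ := (wMeasure w).restrict (rect a b))
    (L := max B (Real.exp (γ / β)) ^ β * (wMeasure w (rect a b)).toReal /
      (volume (rect a b)).toReal) (p := 1 / (β - 1)) (q := r - 1) (ae_of_all _ hw)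
    hmeas.aemeasurable hA (by positivity) (by linarith)
    (by linarith) (fun t => ?_) (fun t ht => ?_)).trans_eq ?_
  · exact (measure_mono (subset_univ _)).trans
      (by rw [Measure.restrict_apply_univ, ENNReal.ofReal_toReal hRfin])
  · rw [Measure.restrict_apply (measurableSet_lt measurable_const hmeas)]
    exact wMeasure_superlevel_le hβ hK.le hmeas hloc hab
      (fun S hSR hS => wMeasure_le_volume_ratio_rpow htaub hloc (by linarith) hγ hab hS hSR) ht
  · rw [hβ1]
    congr 1
    ring

end ReverseHolder

lemma rpow_inv_mul_rpow_mul_eq {K A v c β r : ℝ} (hK : 0 ≤ K) (hA : 0 ≤ A) (hv : 0 ≤ v)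
    (hc : 0 ≤ c) (hr : 0 < r) :
    (v⁻¹ * (A * (K ^ β * A / v) ^ (r - 1) * c)) ^ (1 / r) =
      K ^ (β * (r - 1) / r) * c ^ (1 / r) * (v⁻¹ * A) := by
  have hAv : 0 ≤ v⁻¹ * A := by positivity
  have hpow : (v⁻¹ * A) ^ r = (v⁻¹ * A) ^ (r - 1) * (v⁻¹ * A) := by
    rw [← Real.rpow_add_one' hAv (by linarith), sub_add_cancel]
  have hbase : v⁻¹ * (A * (K ^ β * A / v) ^ (r - 1) * c) =
      (K ^ (β * (r - 1) / r) * (v⁻¹ * A)) ^ r * c := by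
    rw [Real.mul_rpow (by positivity) hAv, ← Real.rpow_mul hK, div_mul_cancel₀ _ hr.ne',
      Real.rpow_mul hK, show K ^ β * A / v = K ^ β * (v⁻¹ * A) by ring,
      Real.mul_rpow (by positivity) hAv, hpow]
    ring
  rw [hbase, Real.mul_rpow (by positivity) hc, one_div, Real.rpow_rpow_inv (by positivity) hr.ne']
  ring

theorem stmt8_general {n : ℕ} (w : (Fin n → ℝ) → ℝ) (hw : ∀ x, 0 ≤ w x) (hmeas : Measurable w)
    (hloc : LocallyIntegrable w volume)
    (B β γ : ℝ) (hγ : 0 < γ)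
    (htaub : ∀ α : ℝ, 1 - Real.exp (-γ) < α → α < 1 →
      CSw w α - 1 ≤ ENNReal.ofReal (B * (1 - α) ^ (1 / β))) :
    ∀ a b : Fin n → ℝ, (∀ i, a i < b i) →
      ∀ r r' : ℝ, 1 < r → r < β / (β - 1) → 1 / r + 1 / r' = 1 →
        ((volume (rect a b)).toReal⁻¹ * ∫ x in rect a b, w x ^ r) ^ (1 / r) ≤
          (max B (Real.exp (γ / β))) ^ (β / r') *
            ((β / (β - 1) - 1) / (β / (β - 1) - r)) ^ (1 / r) *
            ((volume (rect a b)).toReal⁻¹ * ∫ x in rect a b, w x) := by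
  intro a b hab r r' hr1 hr2 hrr'
  have hβ : 1 < β := one_lt_of_one_lt_div_sub_one (hr1.trans hr2)
  have hc : 0 ≤ (β / (β - 1) - 1) / (β / (β - 1) - r) := div_nonneg (by linarith) (by linarith)
  have hexp : β / r' = β * (r - 1) / r := by
    rw [div_eq_mul_one_div β r', show 1 / r' = 1 - 1 / r by linarith]
    field_simp
  rw [setIntegral_eq_toReal_wMeasure hw hmeas, hexp, ← rpow_inv_mul_rpow_mul_eq
    ((Real.exp_pos _).le.trans (le_max_right _ _)) ENNReal.toReal_nonneg ENNReal.toReal_nonneg hc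
    (by linarith)]
  gcongr
  · exact mul_nonneg (by positivity) (integral_nonneg fun x => Real.rpow_nonneg (hw x) r)
  · exact setIntegral_rect_rpow_le htaub hw hmeas hloc hβ hγ hab hr1 hr2

/-- a weighted Solyanik estimate for the strong maximal operator implies
a reverse Hölder inequality on rectangles. -/
theorem stmt8 {n : ℕ} (w : (Fin n → ℝ) → ℝ) (hw : ∀ x, 0 ≤ w x) (hmeas : Measurable w)
    (hloc : LocallyIntegrable w volume)
    (B β γ : ℝ) (hB : 1 ≤ B) (hβ : 1 ≤ β) (hγ : 0 < γ)
    (htaub : ∀ α : ℝ, 1 - Real.exp (-γ) < α → α < 1 →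
      CSw w α - 1 ≤ ENNReal.ofReal (B * (1 - α) ^ (1 / β))) :
    ∀ a b : Fin n → ℝ, (∀ i, a i < b i) →
      ∀ r r' : ℝ, 1 < r → r < β / (β - 1) → 1 / r + 1 / r' = 1 →
        ((volume (rect a b)).toReal⁻¹ * ∫ x in rect a b, w x ^ r) ^ (1 / r) ≤
          (max B (Real.exp (γ / β))) ^ (β / r') *
            ((β / (β - 1) - 1) / (β / (β - 1) - r)) ^ (1 / r) *
            ((volume (rect a b)).toReal⁻¹ * ∫ x in rect a b, w x) :=
  stmt8_general w hw hmeas hloc B β γ hγ htaub
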